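/- Let P be a set of n points in ℝ^d (d ≥ 2) in general position with n ≥ d + 3, and let C be the center of P (assumed nonempty). If C does not have dimension d, then C consists of exactly one point, that point belongs to P, and n = k(d+1) + 1 for some integer k ≥ 2. -/

import Mathlib

/-- A centerpoint of a finite set `P` of points in `ℝ^d`: every closed halfspace
containing `c` contains at least `⌈|P|/(d+1)⌉` points of `P`. -/
def IsCenterpoint {d : ℕ} (P : Finset (EuclideanSpace ℝ (Fin d)))
    (c : EuclideanSpace ℝ (Fin d)) : Prop :=
  ∀ (f : EuclideanSpace ℝ (Fin d) →ₗ[ℝ] ℝ) (a : ℝ), f ≠ 0 → a ≤ f c →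
    ⌈(P.card : ℚ) / (d + 1)⌉₊ ≤ (P.filter fun q => a ≤ f q).card

/-- The dimension of a subset of `ℝ^d`: the rank of the direction of its affine span. -/
noncomputable def setDim {d : ℕ} (S : Set (EuclideanSpace ℝ (Fin d))) : ℕ :=
  Module.finrank ℝ (affineSpan ℝ S).direction

/-- General position in `ℝ^d`: for every `k ∈ {1, …, d-1}`, no `k + 2` points of `P`
lie in a `k`-dimensional affine subspace. -/
def InGeneralPosition {d : ℕ} (P : Finset (EuclideanSpace ℝ (Fin d))) : Prop :=
  ∀ k : ℕ, 1 ≤ k → k ≤ d - 1 →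
    ∀ A : AffineSubspace ℝ (EuclideanSpace ℝ (Fin d)),
      Module.finrank ℝ A.direction = k →
      ((P : Set (EuclideanSpace ℝ (Fin d))) ∩ (A : Set (EuclideanSpace ℝ (Fin d)))).ncard < k + 2

/-!
Let `r = ⌈n / (d + 1)⌉`, so `c` is a centerpoint iff every closed halfspace through `c` holds
at least `r` points of `P` (Tukey depth `≥ r`). Call a unit normal `u` tight at `c` if the open
halfspace `⟪u, ·⟫ > ⟪u, c⟫` holds fewer than `r` points.

If `0` is not in the convex hull of the (compact) set of tight directions at a centerpoint `c`,
a vector `v` separating them from `0` pushes `c` to a point `c + t • v` surrounded by a ball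
of centerpoints, so the center is `d`-dimensional.

Otherwise Carathéodory writes `0` as a positive combination of `m ≤ ℓ + 1` tight directions
`zᵢ` spanning a space `W` of dimension `ℓ`. The points of `P` in none of the open halfspaces
`⟪zᵢ, · - c⟫ > 0` lie on the flat `c + Wᗮ`, so general position gives
`n ≤ (ℓ + 1)(r - 1) + (d - ℓ + 1)`. As `n > (d + 1)(r - 1)` and `n ≥ d + 3`, this forces
`ℓ = d`: the flat is `{c}`, so `c ∈ P`, `n = (d + 1)(r - 1) + 1`, and every other point of `P`
is in an open tight halfspace at `c`. A second centerpoint `x` is impossible: `c` would lie in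
an open tight halfspace at `x`, and the parallel closed halfspace through `c` would then hold
fewer than `r` points.
-/

open Finset Module Set Metric
open scoped RealInnerProductSpace Topology

theorem IsCompact.convexHull_of_finiteDimensional {E : Type*} [NormedAddCommGroup E]
    [NormedSpace ℝ E] [FiniteDimensional ℝ E] {K : Set E} (hK : IsCompact K) :
    IsCompact (convexHull ℝ K) := by
  classical
  set N := finrank ℝ E + 1
  let F : (Fin N → ℝ) × (Fin N → E) → E := fun p => Fintype.linearCombination ℝ p.2 p.1
  suffices h : convexHull ℝ K = F '' (stdSimplex ℝ (Fin N) ×ˢ univ.pi fun _ => K) by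
    rw [h]
    refine ((isCompact_stdSimplex ℝ (Fin N)).prod (isCompact_univ_pi fun _ => hK)).image ?_
    simp only [F, Fintype.linearCombination_apply]
    fun_prop
  refine Subset.antisymm (fun x hx => ?_) ?_
  · -- Carathéodory: `x` is a convex combination of at most `N` points of `K`
    rw [convexHull_eq_union] at hx
    simp only [mem_iUnion] at hx
    obtain ⟨t, htK, hai, hx⟩ := hx
    have : Nonempty t := (Finset.nonempty_iff_ne_empty.mpr (by rintro rfl; simp at hx)).coe_sort
    obtain ⟨e⟩ : Nonempty (t ↪ Fin N) := Function.Embedding.nonempty_of_card_le <| by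
      simpa [N] using hai.card_le_finrank_succ.trans
        (Nat.succ_le_succ (Submodule.finrank_le _))
    set z : Fin N → E := fun i => (Function.invFun e i : t)
    have hz : range z = t := by
      rw [show z = Subtype.val ∘ Function.invFun e from rfl, range_comp,
        (Function.invFun_surjective e.injective).range_eq, image_univ, Subtype.range_coe]
    rw [← hz, show range z = Fintype.linearCombination ℝ z '' range fun i => Pi.single i 1 by
      rw [← range_comp]; congr 1; ext i; simp, ← LinearMap.image_convexHull,
      convexHull_rangle_single_eq_stdSimplex] at hx
    obtain ⟨w, hw, rfl⟩ := hx
    exact ⟨(w, z), ⟨hw, fun i _ => htK (hz ▸ mem_range_self i)⟩, rfl⟩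
  · rintro _ ⟨⟨w, z⟩, ⟨hw, hz⟩, rfl⟩
    exact mem_convexHull_of_exists_fintype w z hw.1 hw.2 (fun i => hz i trivial)
      (Fintype.linearCombination_apply ℝ z w).symm

theorem isOpen_setOf_le_card_filter {X ι : Type*} [TopologicalSpace X] (s : Finset ι)
    (p : X → ι → Prop) [∀ x, DecidablePred (p x)] (hp : ∀ i, IsOpen {x | p x i})
    (r : ℕ) :
    IsOpen {x | r ≤ #{i ∈ s | p x i}} := by
  refine isOpen_iff_forall_mem_open.mpr fun x hx => ⟨⋂ i ∈ {i ∈ s | p x i}, {y | p y i}, ?_,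
    isOpen_biInter_finset fun i _ => hp i, mem_iInter₂.mpr fun i hi => (mem_filter.mp hi).2⟩
  intro y hy
  exact hx.trans (Finset.card_le_card fun i hi =>
    mem_filter.mpr ⟨(mem_filter.mp hi).1, mem_iInter₂.mp hy i hi⟩)

theorem vectorSpan_le_span (k : Type*) {V : Type*} [Ring k] [AddCommGroup V] [Module k V]
    (s : Set V) : vectorSpan k s ≤ Submodule.span k s := by
  rw [vectorSpan_def, Submodule.span_le]
  rintro _ ⟨a, ha, b, hb, rfl⟩
  exact Submodule.sub_mem _ (Submodule.subset_span ha) (Submodule.subset_span hb)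

theorem AffineIndependent.card_le_finrank_span_add_one {k V ι : Type*} [Field k]
    [AddCommGroup V] [Module k V] [FiniteDimensional k V] [Fintype ι] {z : ι → V}
    (hz : AffineIndependent k z) : Fintype.card ι ≤ finrank k (Submodule.span k (range z)) + 1 :=
  hz.card_le_finrank_succ.trans (Nat.succ_le_succ (Submodule.finrank_mono (vectorSpan_le_span k _)))

theorem Finset.card_le_sum_card_filter_add_card_filter_forall_not {α ι : Type*} [Fintype ι]
    (s : Finset α) (p : α → ι → Prop) [∀ i, DecidablePred (p · i)] :
    #s ≤ ∑ i, #{a ∈ s | p a i} + #{a ∈ s | ∀ i, ¬ p a i} := by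
  classical
  rw [← card_filter_add_card_filter_not (fun a => ∃ i, p a i)]
  simp only [not_exists]
  gcongr
  calc #{a ∈ s | ∃ i, p a i} ≤ #(univ.biUnion fun i => {a ∈ s | p a i}) :=
        card_le_card fun a ha => by simpa using ha
    _ ≤ _ := card_biUnion_le

section TukeyDepth

variable {E : Type*} [NormedAddCommGroup E] [InnerProductSpace ℝ E]

def HasTukeyDepthAtLeast (P : Finset E) (r : ℕ) (c : E) : Prop :=
  ∀ u ∈ sphere (0 : E) 1, r ≤ #{q ∈ P | ⟪u, c⟫ ≤ ⟪u, q⟫}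

def tightDirections (P : Finset E) (r : ℕ) (c : E) : Set E :=
  {u ∈ sphere (0 : E) 1 | #{q ∈ P | ⟪u, c⟫ < ⟪u, q⟫} < r}

theorem isClosed_tightDirections (P : Finset E) (r : ℕ) (c : E) :
    IsClosed (tightDirections P r c) := by
  have := isOpen_setOf_le_card_filter P (fun u q => ⟪u, c⟫ < ⟪u, q⟫)
    (fun q => isOpen_lt (by fun_prop) (by fun_prop)) r
  convert (isClosed_sphere (x := (0 : E)) (ε := 1)).inter this.isClosed_compl using 1
  ext u
  simp [tightDirections]

theorem HasTukeyDepthAtLeast.inner_le_of_mem_tightDirections {P : Finset E} {r : ℕ}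
    {c x u : E} (hc : HasTukeyDepthAtLeast P r c) (hu : u ∈ tightDirections P r x) :
    ⟪u, c⟫ ≤ ⟪u, x⟫ := by
  by_contra! hxc
  have hsub : {q ∈ P | ⟪u, c⟫ ≤ ⟪u, q⟫} ⊆ {q ∈ P | ⟪u, x⟫ < ⟪u, q⟫} :=
    monotone_filter_right P fun q _ h => hxc.trans_le h
  exact (hc u hu.1 |>.trans (Finset.card_le_card hsub)).not_gt hu.2

theorem eventually_forall_le_card_filter_inner_lt {P : Finset E} {r : ℕ} {c : E} {K : Set E}
    (hK : IsCompact K) (h : ∀ u ∈ K, r ≤ #{q ∈ P | ⟪u, c⟫ < ⟪u, q⟫}) :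
    ∀ᶠ y in 𝓝 c, ∀ u ∈ K, r ≤ #{q ∈ P | ⟪u, y⟫ < ⟪u, q⟫} := by
  refine hK.eventually_forall_of_forall_eventually fun u hu => ?_
  exact (isOpen_setOf_le_card_filter P (fun (p : E × E) q => ⟪p.2, p.1⟫ < ⟪p.2, q⟫)
    (fun q => isOpen_lt (by fun_prop) (by fun_prop)) r).mem_nhds (h u hu)

theorem exists_inner_lt_of_zero_notMem_convexHull [FiniteDimensional ℝ E] {K : Set E}
    (hK : IsCompact K) (h0 : (0 : E) ∉ convexHull ℝ K) :
    ∃ v : E, ∃ s < 0, ∀ u ∈ K, ⟪u, v⟫ < s := by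
  obtain ⟨f, s, hf, hs⟩ := geometric_hahn_banach_closed_point (convex_convexHull ℝ K)
    hK.convexHull_of_finiteDimensional.isClosed h0
  refine ⟨(InnerProductSpace.toDual ℝ E).symm f, s, by simpa using hs, fun u hu => ?_⟩
  rw [real_inner_comm, InnerProductSpace.toDual_symm_apply]
  exact hf u (subset_convexHull ℝ K hu)

theorem isCompact_tightDirections [FiniteDimensional ℝ E] (P : Finset E) (r : ℕ) (c : E) :
    IsCompact (tightDirections P r c) :=
  (isCompact_sphere 0 1).of_isClosed_subset (isClosed_tightDirections P r c) fun _ hu => hu.1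

theorem nonempty_interior_setOf_hasTukeyDepthAtLeast [FiniteDimensional ℝ E] {P : Finset E}
    {r : ℕ} {c : E} (hc : HasTukeyDepthAtLeast P r c)
    (h0 : (0 : E) ∉ convexHull ℝ (tightDirections P r c)) :
    (interior {y | HasTukeyDepthAtLeast P r y}).Nonempty := by
  obtain ⟨v, s, hs, hv⟩ := exists_inner_lt_of_zero_notMem_convexHull
    (isCompact_tightDirections P r c) h0
  set A := {u ∈ sphere (0 : E) 1 | s ≤ ⟪u, v⟫}
  have hA : IsCompact A := (isCompact_sphere 0 1).of_isClosed_subset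
    (isClosed_sphere.inter (isClosed_le (g := fun u => ⟪u, v⟫) continuous_const (by fun_prop)))
    fun _ hu => hu.1
  have hAc : ∀ u ∈ A, r ≤ #{q ∈ P | ⟪u, c⟫ < ⟪u, q⟫} :=
    fun u hu => not_lt.mp fun h => (hv u ⟨hu.1, h⟩).not_ge hu.2
  obtain ⟨ε, hε, hnear⟩ :=
    Metric.eventually_nhds_iff.mp (eventually_forall_le_card_filter_inner_lt hA hAc)
  -- for `y` near `c + t • v` and unit `u ∉ A`, `⟪u, y⟫ < ⟪u, c⟫`; `hnear` covers `u ∈ A`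
  set t := ε / (2 * (‖v‖ - s))
  have hvs : 0 < ‖v‖ - s := by linarith [norm_nonneg v]
  have ht : 0 < t := by positivity
  refine ⟨c + t • v, mem_interior.mpr ⟨ball (c + t • v) (-(t * s)), fun y hy u hu => ?_,
    isOpen_ball, mem_ball_self (by nlinarith)⟩⟩
  have hy' : ‖y - (c + t • v)‖ < -(t * s) := by rwa [mem_ball, dist_eq_norm] at hy
  have hu1 : ‖u‖ = 1 := by simpa using hu
  have hinner : ⟪u, y⟫ = ⟪u, c⟫ + t * ⟪u, v⟫ + ⟪u, y - (c + t • v)⟫ := by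
    simp only [inner_sub_right, inner_add_right, real_inner_smul_right]; ring
  have hbound : ⟪u, y - (c + t • v)⟫ < -(t * s) :=
    (real_inner_le_norm _ _).trans_lt (by rwa [hu1, one_mul])
  by_cases hsu : s ≤ ⟪u, v⟫
  · have hyc : dist y c < ε := by
      calc dist y c ≤ dist y (c + t • v) + dist (c + t • v) c := dist_triangle _ _ _
        _ < -(t * s) + t * ‖v‖ := by
          rw [dist_eq_norm _ c, add_sub_cancel_left, norm_smul, Real.norm_of_nonneg ht.le]
          exact add_lt_add_of_lt_of_le hy le_rfl
        _ = ε / 2 := by simp only [t]; field_simp; ring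
        _ < ε := half_lt_self hε
    exact (hnear hyc u ⟨hu, hsu⟩).trans
      (Finset.card_le_card (monotone_filter_right P fun q _ h => h.le))
  · have hyc : ⟪u, y⟫ < ⟪u, c⟫ := by nlinarith
    exact (hc u hu).trans
      (Finset.card_le_card (monotone_filter_right P fun q _ h => hyc.le.trans h))

theorem mem_orthogonal_span_range_of_sum_smul_eq_zero {ι : Type*} [Fintype ι] {z : ι → E}
    {w : ι → ℝ} (hw : ∀ i, 0 < w i) (hz : ∑ i, w i • z i = 0) {x : E}
    (hx : ∀ i, ⟪z i, x⟫ ≤ 0) : x ∈ (Submodule.span ℝ (range z))ᗮ := by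
  have hsum : ∑ i, w i * ⟪z i, x⟫ = 0 := by
    simp_rw [← real_inner_smul_left, ← sum_inner, hz, inner_zero_left]
  have hzero := (Finset.sum_eq_zero_iff_of_nonpos fun i _ =>
    mul_nonpos_of_nonneg_of_nonpos (hw i).le (hx i)).mp hsum
  rw [Submodule.span_range_eq_iSup, ← Submodule.iInf_orthogonal, Submodule.mem_iInf]
  exact fun i => Submodule.mem_orthogonal_singleton_iff_inner_right.mpr <|
    (mul_eq_zero.mp (hzero i (mem_univ i))).resolve_left (hw i).ne'

open Classical in
theorem exists_submodule_of_zero_mem_convexHull_tightDirections [FiniteDimensional ℝ E]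
    {P : Finset E} {r : ℕ} {c : E} (h0 : (0 : E) ∈ convexHull ℝ (tightDirections P r c)) :
    ∃ W : Submodule ℝ E, finrank ℝ W ≠ 0 ∧
      #P ≤ (finrank ℝ W + 1) * (r - 1) + #{q ∈ P | q - c ∈ Wᗮ} ∧
      ∀ q ∈ P, q - c ∉ Wᗮ → ∃ u ∈ tightDirections P r c, ⟪u, c⟫ < ⟪u, q⟫ := by
  obtain ⟨ι, _, z, w, hzT, hz, hw, hw1, hsum⟩ := eq_pos_convex_span_of_mem_convexHull h0
  have hzT' : ∀ i, z i ∈ tightDirections P r c := fun i => hzT (mem_range_self i)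
  set W := Submodule.span ℝ (range z)
  have hperp : ∀ q, (∀ i, ¬⟪z i, c⟫ < ⟪z i, q⟫) → q - c ∈ Wᗮ := fun q hq =>
    mem_orthogonal_span_range_of_sum_smul_eq_zero hw hsum fun i => by
      rw [inner_sub_right, sub_nonpos]; exact not_lt.mp (hq i)
  refine ⟨W, ?_, ?_, fun q _ hq => ?_⟩
  · obtain ⟨i⟩ : Nonempty ι := by
      by_contra! h; simp at hw1
    rw [Ne, Submodule.finrank_eq_zero, Submodule.eq_bot_iff]
    intro hW
    simpa [hW (z i) (Submodule.subset_span (mem_range_self i))] using (hzT' i).1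
  · calc #P
        ≤ ∑ i, #{q ∈ P | ⟪z i, c⟫ < ⟪z i, q⟫} +
            #{q ∈ P | ∀ i, ¬⟪z i, c⟫ < ⟪z i, q⟫} :=
          card_le_sum_card_filter_add_card_filter_forall_not P _
      _ ≤ ∑ _i : ι, (r - 1) + #{q ∈ P | q - c ∈ Wᗮ} :=
          add_le_add (sum_le_sum fun i _ => Nat.le_pred_of_lt (hzT' i).2)
            (card_le_card (monotone_filter_right P fun q _ => hperp q))
      _ ≤ (finrank ℝ W + 1) * (r - 1) + #{q ∈ P | q - c ∈ Wᗮ} := by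
          rw [sum_const, card_univ, smul_eq_mul]
          gcongr
          exact hz.card_le_finrank_span_add_one
  · by_contra! h
    exact hq (hperp q fun i => not_lt.mpr (h (z i) (hzT' i)))

end TukeyDepth

open Classical in
theorem InGeneralPosition.card_filter_sub_mem_le {d : ℕ} {P : Finset (EuclideanSpace ℝ (Fin d))}
    (hgp : InGeneralPosition P) (c : EuclideanSpace ℝ (Fin d))
    {V : Submodule ℝ (EuclideanSpace ℝ (Fin d))} (hV0 : finrank ℝ V ≠ 0)
    (hVd : finrank ℝ V < d) :
    #{q ∈ P | q - c ∈ V} ≤ finrank ℝ V + 1 := by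
  have hgen := hgp (finrank ℝ V) (by omega) (by omega) (AffineSubspace.mk' c V)
    (by rw [AffineSubspace.direction_mk'])
  have hsub : (({q ∈ P | q - c ∈ V} : Finset _) : Set (EuclideanSpace ℝ (Fin d))) ⊆
      (P : Set (EuclideanSpace ℝ (Fin d))) ∩ AffineSubspace.mk' c V := fun q hq =>
    ⟨filter_subset _ _ hq, AffineSubspace.mem_mk'.mpr (mem_filter.mp hq).2⟩
  have := Set.ncard_le_ncard hsub (P.finite_toSet.inter_of_left _)
  rw [Set.ncard_coe_finset] at this
  omega

theorem card_eq_of_zero_mem_convexHull_tightDirections {d r : ℕ}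
    {P : Finset (EuclideanSpace ℝ (Fin d))} {c : EuclideanSpace ℝ (Fin d)}
    (hgp : InGeneralPosition P) (hP : d + 3 ≤ #P) (hr : (d + 1) * (r - 1) < #P)
    (h0 : 0 ∈ convexHull ℝ (tightDirections P r c)) :
    #P = (d + 1) * (r - 1) + 1 ∧ c ∈ P ∧
      ∀ q ∈ P, q ≠ c → ∃ u ∈ tightDirections P r c, ⟪u, c⟫ < ⟪u, q⟫ := by
  classical
  obtain ⟨W, hW0, hcount, hcover⟩ := exists_submodule_of_zero_mem_convexHull_tightDirections h0
  have hWd : finrank ℝ W = d := by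
    have hsum : finrank ℝ W + finrank ℝ Wᗮ = d := by
      simpa using W.finrank_add_finrank_orthogonal
    by_contra hne
    have hflat := hgp.card_filter_sub_mem_le c (V := Wᗮ) (by omega) (by omega)
    obtain ⟨e, he⟩ : ∃ e, finrank ℝ Wᗮ = e + 1 := Nat.exists_eq_add_one.mpr (by omega)
    nlinarith
  have hflat : {q ∈ P | q - c ∈ Wᗮ} ⊆ {c} := fun q hq => by
    have hW : W = ⊤ := Submodule.eq_top_of_finrank_eq (by simpa using hWd)
    simpa [hW, sub_eq_zero] using (mem_filter.mp hq).2
  have hcard := Finset.card_le_card hflat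
  rw [Finset.card_singleton] at hcard
  have hmul : (finrank ℝ W + 1) * (r - 1) ≤ (d + 1) * (r - 1) := by rw [hWd]
  obtain ⟨q, hq⟩ := card_pos.mp (by omega : 0 < #{q ∈ P | q - c ∈ Wᗮ})
  have hqc := Finset.mem_singleton.mp (hflat hq)
  refine ⟨by omega, hqc ▸ (mem_filter.mp hq).1, fun q hq hqc => hcover q hq fun h => hqc ?_⟩
  exact Finset.mem_singleton.mp (hflat (mem_filter.mpr ⟨hq, h⟩))

theorem isCenterpoint_iff_hasTukeyDepthAtLeast {d : ℕ} {P : Finset (EuclideanSpace ℝ (Fin d))}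
    {c : EuclideanSpace ℝ (Fin d)} :
    IsCenterpoint P c ↔ HasTukeyDepthAtLeast P ⌈(#P : ℚ) / (d + 1)⌉₊ c := by
  constructor
  · intro h u hu
    have hu0 : u ≠ 0 := ne_zero_of_mem_unit_sphere ⟨u, hu⟩
    refine h (innerₛₗ ℝ u) ⟪u, c⟫ (fun h0 => hu0 ?_) le_rfl
    simpa using LinearMap.congr_fun h0 u
  · intro h f a hf ha
    set v := (InnerProductSpace.toDual ℝ _).symm (LinearMap.toContinuousLinearMap f)
    have hv : ∀ x, ⟪v, x⟫ = f x := fun x => InnerProductSpace.toDual_symm_apply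
    have hv0 : v ≠ 0 := by
      rintro hv0
      exact hf (LinearMap.ext fun x => by simp [← hv, hv0])
    refine (h (‖v‖⁻¹ • v) (by simp [norm_smul, hv0])).trans
      (card_le_card (monotone_filter_right P fun q _ hq => ?_))
    rw [real_inner_smul_left, real_inner_smul_left,
      mul_le_mul_iff_right₀ (by positivity), hv, hv] at hq
    exact ha.trans hq

theorem setDim_eq_of_nonempty_interior {d : ℕ} {S : Set (EuclideanSpace ℝ (Fin d))}
    (hS : (interior S).Nonempty) : setDim S = d := by
  rw [setDim, affineSpan_eq_top_of_nonempty_interior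
    (hS.mono (interior_mono (subset_convexHull ℝ S))), AffineSubspace.direction_top, finrank_top,
    finrank_euclideanSpace_fin]

theorem mul_ceil_div_sub_one_lt {n m : ℕ} (hn : 0 < n) :
    (m + 1) * (⌈(n : ℚ) / (m + 1)⌉₊ - 1) < n := by
  have hpos : 0 < ⌈(n : ℚ) / (m + 1)⌉₊ := Nat.ceil_pos.mpr (by positivity)
  have h := Nat.lt_ceil.mp (Nat.sub_lt hpos one_pos)
  rw [lt_div_iff₀ (by positivity)] at h
  rw [mul_comm]
  exact_mod_cast h

theorem center_not_full_dim_of_general_position_general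
    (d : ℕ) (P : Finset (EuclideanSpace ℝ (Fin d))) (n : ℕ) (hn : P.card = n)
    (hn3 : d + 3 ≤ n) (hgp : InGeneralPosition P)
    (C : Set (EuclideanSpace ℝ (Fin d))) (hC : C = {c | IsCenterpoint P c})
    (hCne : C.Nonempty) (hdim : setDim C ≠ d) :
    (∃ p ∈ P, C = {p}) ∧ ∃ k : ℕ, 2 ≤ k ∧ n = k * (d + 1) + 1 := by
  subst hn
  set r := ⌈(#P : ℚ) / (d + 1)⌉₊
  have hr : (d + 1) * (r - 1) < #P := mul_ceil_div_sub_one_lt (by omega)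
  have hC' : C = {c | HasTukeyDepthAtLeast P r c} := by
    rw [hC]; ext; exact isCenterpoint_iff_hasTukeyDepthAtLeast
  subst hC'
  have key (c : EuclideanSpace ℝ (Fin d)) (hc : HasTukeyDepthAtLeast P r c) :=
    card_eq_of_zero_mem_convexHull_tightDirections hgp hn3 hr <| by_contra fun h0 =>
      hdim (setDim_eq_of_nonempty_interior (nonempty_interior_setOf_hasTukeyDepthAtLeast hc h0))
  obtain ⟨c, hc⟩ := hCne
  obtain ⟨hcard, hcP, -⟩ := key c hc
  refine ⟨⟨c, hcP, eq_singleton_iff_unique_mem.mpr ⟨hc, fun x hx => ?_⟩⟩, r - 1,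
    by nlinarith, by rw [hcard, mul_comm]⟩
  by_contra hxc
  obtain ⟨u, hu, hlt⟩ := (key x hx).2.2 c hcP (Ne.symm hxc)
  exact hlt.not_ge (hc.inner_le_of_mem_tightDirections hu)

/-- for `n ≥ d + 3` points in general position in `ℝ^d` (`d ≥ 2`) with
nonempty center `C`, if `C` is not `d`-dimensional then `C` is a single point of `P`
and `n = k(d+1) + 1` for some `k ≥ 2`. -/
theorem center_not_full_dim_of_general_position
    (d : ℕ) (hd : 2 ≤ d) (P : Finset (EuclideanSpace ℝ (Fin d))) (n : ℕ) (hn : P.card = n)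
    (hn3 : d + 3 ≤ n) (hgp : InGeneralPosition P)
    (C : Set (EuclideanSpace ℝ (Fin d))) (hC : C = {c | IsCenterpoint P c})
    (hCne : C.Nonempty) (hdim : setDim C ≠ d) :
    (∃ p ∈ P, C = {p}) ∧ ∃ k : ℕ, 2 ≤ k ∧ n = k * (d + 1) + 1 :=
  center_not_full_dim_of_general_position_general d P n hn hn3 hgp C hC hCne hdim
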